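/- (Lemma 14, strong interference) Suppose INR12 ≥ SNR1 and INR21 ≥ SNR2. Then SNRᵖ1 = SNRᵖ2 = 0, a1 = a2 = 0, bi = Li for i = 1,2, and for any (R1,R2) ∈ C_HK ∩ B, the split R1c = R1, R2c = R2, R1p = R2p = 0 satisfies (R1c, 0, R1p, R2c, 0, R2p) ∈ R_RHK, Rip ≥ ai and Ric ≥ bi for i = 1,2; i.e., every point of C_HK ∩ B is achieved by a non-randomized Han-Kobayashi split that fully utilizes the interference-free rates. -/

import Mathlib

open Real

/-- `INRᵖᵢⱼ = min(1, INRᵢⱼ)` if `INRᵢⱼ < SNRᵢ`, and `0` otherwise. -/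
noncomputable def INRp (INRij SNRi : ℝ) : ℝ := if INRij < SNRi then min 1 INRij else 0

/-- `SNRᵖ₁ = SNR₁ · INRᵖ₂₁ / INR₂₁`. -/
noncomputable def SNRp1 (SNR1 SNR2 INR12 INR21 : ℝ) : ℝ :=
  SNR1 * INRp INR21 SNR2 / INR21

/-- `SNRᵖ₂ = SNR₂ · INRᵖ₁₂ / INR₁₂`. -/
noncomputable def SNRp2 (SNR1 SNR2 INR12 INR21 : ℝ) : ℝ :=
  SNR2 * INRp INR12 SNR1 / INR12

/-- Modified MAC constraints at receiver `i` of the Gaussian IC, with parameters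
`SNRᵢ`, `INRᵢⱼ`, `INRᵖᵢⱼ`, `SNRᵖᵢ`, on the own common and private rates `Ric, Rip`
and the other user's common and common-random rates `Rjc, Rjr`
(all logarithms base 2). -/
def gMAC (Si Iij Ipij Spi : ℝ) (Ric Rip Rjc Rjr : ℝ) : Prop :=
  Ric + Rip + Rjc + Rjr ≤ logb 2 (1 + (Si + Iij - Ipij) / (1 + Ipij)) ∧
  Rip + Rjc + Rjr ≤ logb 2 (1 + (Spi + Iij - Ipij) / (1 + Ipij)) ∧
  Rip ≤ logb 2 (1 + Spi / (1 + Ipij)) ∧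
  Ric + Rip ≤ logb 2 (1 + Si / (1 + Ipij))

/-- The region `R_RHK`: nonnegative rate tuples `(R1c, R1r, R1p, R2c, R2r, R2p)`
satisfying the modified MAC constraints at both receivers. -/
noncomputable def gRHK (SNR1 SNR2 INR12 INR21 : ℝ)
    (R1c R1r R1p R2c R2r R2p : ℝ) : Prop :=
  0 ≤ R1c ∧ 0 ≤ R1r ∧ 0 ≤ R1p ∧ 0 ≤ R2c ∧ 0 ≤ R2r ∧ 0 ≤ R2p ∧
  gMAC SNR1 INR12 (INRp INR12 SNR1) (SNRp1 SNR1 SNR2 INR12 INR21) R1c R1p R2c R2r ∧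
  gMAC SNR2 INR21 (INRp INR21 SNR2) (SNRp2 SNR1 SNR2 INR12 INR21) R2c R2p R1c R1r

/-- `Lᵢ = log(1 + SNRᵢ/(1 + INRᵢⱼ))`: rate of user `i` treating interference as noise. -/
noncomputable def gL (Si Iij : ℝ) : ℝ := logb 2 (1 + Si / (1 + Iij))

/-- `aᵢ = log(1 + SNRᵖᵢ/(1 + INRᵢⱼ))`: required private rate of user `i`. -/
noncomputable def ga (Si Iij Spi : ℝ) : ℝ := logb 2 (1 + Spi / (1 + Iij))

/-- `bᵢ = log(1 + (SNRᵢ − SNRᵖᵢ)/(1 + SNRᵖᵢ + INRᵢⱼ))`: required common rate of user `i`. -/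
noncomputable def gb (Si Iij Spi : ℝ) : ℝ := logb 2 (1 + (Si - Spi) / (1 + Spi + Iij))

/-- `Uᵢ`: Gaussian upper bound for user `i` (arguments `SNRᵢ, INRᵢⱼ, SNRⱼ, INRⱼᵢ`). -/
noncomputable def gU (Si Iij Sj Iji : ℝ) : ℝ :=
  min (logb 2 (1 + Si + Iij) -
        logb 2 (1 + max (Sj - max Iji (Sj / Iij)) 0 / (1 + Iji + max Iji (Sj / Iij))))
      (logb 2 (1 + Si))

/-- `C_HK`: rate pairs achievable by non-randomized Han-Kobayashi splits in `R_RHK`. -/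
noncomputable def gCHK (SNR1 SNR2 INR12 INR21 : ℝ) (R1 R2 : ℝ) : Prop :=
  ∃ R1c R1p R2c R2p : ℝ, R1 = R1c + R1p ∧ R2 = R2c + R2p ∧
    gRHK SNR1 SNR2 INR12 INR21 R1c 0 R1p R2c 0 R2p

/-- The box `B = {(R1,R2) : Lᵢ ≤ Rᵢ ≤ Uᵢ, i = 1,2}`. -/
noncomputable def gB (SNR1 SNR2 INR12 INR21 : ℝ) (R1 R2 : ℝ) : Prop :=
  gL SNR1 INR12 ≤ R1 ∧ R1 ≤ gU SNR1 INR12 SNR2 INR21 ∧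
  gL SNR2 INR21 ≤ R2 ∧ R2 ≤ gU SNR2 INR21 SNR1 INR12

theorem INRp_eq_zero_of_le {INRij SNRi : ℝ} (h : SNRi ≤ INRij) : INRp INRij SNRi = 0 :=
  if_neg (not_lt.mpr h)

theorem SNRp1_eq_zero_of_le {SNR1 SNR2 INR12 INR21 : ℝ} (h : SNR2 ≤ INR21) :
    SNRp1 SNR1 SNR2 INR12 INR21 = 0 := by
  rw [SNRp1, INRp_eq_zero_of_le h, mul_zero, zero_div]

theorem SNRp2_eq_zero_of_le {SNR1 SNR2 INR12 INR21 : ℝ} (h : SNR1 ≤ INR12) :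
    SNRp2 SNR1 SNR2 INR12 INR21 = 0 := by
  rw [SNRp2, INRp_eq_zero_of_le h, mul_zero, zero_div]

theorem ga_zero (Si Iij : ℝ) : ga Si Iij 0 = 0 := by
  simp [ga]

theorem gb_zero (Si Iij : ℝ) : gb Si Iij 0 = gL Si Iij := by
  simp [gb, gL]

theorem gMAC.private_nonpos {Si Iij Ipij Ric Rip Rjc Rjr : ℝ}
    (h : gMAC Si Iij Ipij 0 Ric Rip Rjc Rjr) : Rip ≤ 0 := by
  simpa using h.2.2.1

/-- Strong interference forces `SNRᵖᵢ = 0`, which leaves no room for private rates. -/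
theorem gRHK_common_of_gCHK {SNR1 SNR2 INR12 INR21 R1 R2 : ℝ}
    (hstrong1 : SNR1 ≤ INR12) (hstrong2 : SNR2 ≤ INR21)
    (hR : gCHK SNR1 SNR2 INR12 INR21 R1 R2) :
    gRHK SNR1 SNR2 INR12 INR21 R1 0 0 R2 0 0 := by
  obtain ⟨R1c, R1p, R2c, R2p, rfl, rfl, hRHK⟩ := hR
  have ⟨_, _, hR1p, _, _, hR2p, hMAC1, hMAC2⟩ := hRHK
  rw [SNRp1_eq_zero_of_le hstrong2] at hMAC1
  rw [SNRp2_eq_zero_of_le hstrong1] at hMAC2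
  obtain rfl : R1p = 0 := le_antisymm hMAC1.private_nonpos hR1p
  obtain rfl : R2p = 0 := le_antisymm hMAC2.private_nonpos hR2p
  simpa only [add_zero] using hRHK

theorem stmt15_general (SNR1 SNR2 INR12 INR21 : ℝ)
    (hstrong1 : SNR1 ≤ INR12) (hstrong2 : SNR2 ≤ INR21) :
    SNRp1 SNR1 SNR2 INR12 INR21 = 0 ∧
    SNRp2 SNR1 SNR2 INR12 INR21 = 0 ∧
    ga SNR1 INR12 (SNRp1 SNR1 SNR2 INR12 INR21) = 0 ∧
    ga SNR2 INR21 (SNRp2 SNR1 SNR2 INR12 INR21) = 0 ∧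
    gb SNR1 INR12 (SNRp1 SNR1 SNR2 INR12 INR21) = gL SNR1 INR12 ∧
    gb SNR2 INR21 (SNRp2 SNR1 SNR2 INR12 INR21) = gL SNR2 INR21 ∧
    (∀ R1 R2 : ℝ, gCHK SNR1 SNR2 INR12 INR21 R1 R2 →
      gB SNR1 SNR2 INR12 INR21 R1 R2 →
      gRHK SNR1 SNR2 INR12 INR21 R1 0 0 R2 0 0 ∧
      ga SNR1 INR12 (SNRp1 SNR1 SNR2 INR12 INR21) ≤ 0 ∧
      gb SNR1 INR12 (SNRp1 SNR1 SNR2 INR12 INR21) ≤ R1 ∧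
      ga SNR2 INR21 (SNRp2 SNR1 SNR2 INR12 INR21) ≤ 0 ∧
      gb SNR2 INR21 (SNRp2 SNR1 SNR2 INR12 INR21) ≤ R2) := by
  rw [SNRp1_eq_zero_of_le hstrong2, SNRp2_eq_zero_of_le hstrong1, ga_zero, ga_zero, gb_zero,
    gb_zero]
  exact ⟨rfl, rfl, rfl, rfl, rfl, rfl, fun R1 R2 hC hB =>
    ⟨gRHK_common_of_gCHK hstrong1 hstrong2 hC, le_rfl, hB.1, le_rfl, hB.2.2.1⟩⟩

/-- (Lemma 14, strong interference) If `INR12 ≥ SNR1` and `INR21 ≥ SNR2`, then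
`SNRᵖ₁ = SNRᵖ₂ = 0`, `a₁ = a₂ = 0`, `bᵢ = Lᵢ`, and for every `(R1,R2) ∈ C_HK ∩ B` the
split `R1c = R1, R2c = R2, R1p = R2p = 0` lies in `R_RHK` and fully utilizes the
interference-free rates. -/
theorem stmt15 (SNR1 SNR2 INR12 INR21 : ℝ)
    (hS1 : 0 < SNR1) (hS2 : 0 < SNR2) (hI12 : 0 < INR12) (hI21 : 0 < INR21)
    (hstrong1 : SNR1 ≤ INR12) (hstrong2 : SNR2 ≤ INR21) :
    SNRp1 SNR1 SNR2 INR12 INR21 = 0 ∧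
    SNRp2 SNR1 SNR2 INR12 INR21 = 0 ∧
    ga SNR1 INR12 (SNRp1 SNR1 SNR2 INR12 INR21) = 0 ∧
    ga SNR2 INR21 (SNRp2 SNR1 SNR2 INR12 INR21) = 0 ∧
    gb SNR1 INR12 (SNRp1 SNR1 SNR2 INR12 INR21) = gL SNR1 INR12 ∧
    gb SNR2 INR21 (SNRp2 SNR1 SNR2 INR12 INR21) = gL SNR2 INR21 ∧
    (∀ R1 R2 : ℝ, gCHK SNR1 SNR2 INR12 INR21 R1 R2 →
      gB SNR1 SNR2 INR12 INR21 R1 R2 →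
      gRHK SNR1 SNR2 INR12 INR21 R1 0 0 R2 0 0 ∧
      ga SNR1 INR12 (SNRp1 SNR1 SNR2 INR12 INR21) ≤ 0 ∧
      gb SNR1 INR12 (SNRp1 SNR1 SNR2 INR12 INR21) ≤ R1 ∧
      ga SNR2 INR21 (SNRp2 SNR1 SNR2 INR12 INR21) ≤ 0 ∧
      gb SNR2 INR21 (SNRp2 SNR1 SNR2 INR12 INR21) ≤ R2) :=
  stmt15_general SNR1 SNR2 INR12 INR21 hstrong1 hstrong2
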